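/- arXiv:2510.13693 — 3 statements merged into one kernel-verified Lean document; each statement's English description precedes it below -/
import Mathlib

section
/- For all f, g : ℕ → ℝ one has, in [0,∞], ‖f+g‖_𝔹 ≤ 2·(‖f+g‖_{1,∞} + ‖f‖_{1,∞} + ‖g‖_{1,∞}) + ‖f‖_𝔹 + ‖g‖_𝔹. -/
open Filter ENNReal
open scoped Classical

noncomputable section

/-- Coordinate projection onto a finite set of indices. -/
def proj (A : Finset ℕ) (f : ℕ → ℝ) : ℕ → ℝ := fun n => if n ∈ A then f n else 0

/-- Coordinate projection onto a set of indices. -/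
def projSet (A : Set ℕ) (f : ℕ → ℝ) : ℕ → ℝ := fun n => if n ∈ A then f n else 0

/-- `𝟙*_A(f) = ∑_{n ∈ A} f n`. -/
def oneStar (f : ℕ → ℝ) (A : Finset ℕ) : ℝ := ∑ n ∈ A, f n

/-- `A` is a greedy set of `f`. -/
def GreedySet (f : ℕ → ℝ) (A : Finset ℕ) : Prop :=
  ∀ n ∈ A, ∀ k, k ∉ A → |f k| ≤ |f n|

/-- `β(f,A) = sup_{I ∈ ℐ} |𝟙*_{I∖A}(f)| ∈ [0,∞]`, the sup running over all finite
integer intervals `I = [a,b]`. -/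
def beta (f : ℕ → ℝ) (A : Finset ℕ) : ℝ≥0∞ :=
  ⨆ a : ℕ, ⨆ b : ℕ, ENNReal.ofReal |oneStar f (Finset.Icc a b \ A)|

/-- `‖f‖_𝔹 = sup_{A ∈ 𝒢(f)} β(f,A) ∈ [0,∞]`. -/
def BNorm (f : ℕ → ℝ) : ℝ≥0∞ :=
  ⨆ A ∈ {A : Finset ℕ | GreedySet f A}, beta f A

/-- Membership in `𝔹`, i.e. `‖f‖_𝔹 < ∞`. -/
def MemB (f : ℕ → ℝ) : Prop := BNorm f < ⊤

/-- Membership in `c₀`. -/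
def Memc0 (f : ℕ → ℝ) : Prop := Tendsto f atTop (nhds 0)

/-- Membership in `𝔹₀`. -/
def MemB0 (f : ℕ → ℝ) : Prop :=
  Memc0 f ∧ ∀ ε : ℝ, 0 < ε → ∃ A : Finset ℕ, GreedySet f A ∧
    ∀ B : Finset ℕ, GreedySet f B → A ⊆ B → beta f B < ENNReal.ofReal ε

/-- The net `(𝟙*_A(f))_{A ∈ 𝒢(f)}`, directed by inclusion, converges to `s`. -/
def GreedyLim (f : ℕ → ℝ) (s : ℝ) : Prop :=
  ∀ ε : ℝ, 0 < ε → ∃ A : Finset ℕ, GreedySet f A ∧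
    ∀ B : Finset ℕ, GreedySet f B → A ⊆ B → |oneStar f B - s| < ε

/-- Membership in `𝔸`. -/
def MemA (f : ℕ → ℝ) : Prop := Memc0 f ∧ ∃ s, GreedyLim f s

/-- `σ_g(f)`, the greedy sum of `f` (junk value `0` if the greedy net does not converge). -/
def sigmaG (f : ℕ → ℝ) : ℝ := if h : ∃ s, GreedyLim f s then h.choose else 0

/-- `‖f‖_𝔸 = sup_{A ∈ 𝒢(f)} |σ_g(f) - 𝟙*_A(f)|`. -/
def ANorm (f : ℕ → ℝ) : ℝ≥0∞ :=
  ⨆ A ∈ {A : Finset ℕ | GreedySet f A}, ENNReal.ofReal |sigmaG f - oneStar f A|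

/-- The series `∑_n f n` converges (in the ordered sense) to `s`. -/
def SeriesLim (f : ℕ → ℝ) (s : ℝ) : Prop :=
  Tendsto (fun m => ∑ n ∈ Finset.range m, f n) atTop (nhds s)

/-- Membership in `𝒔`: the series `∑_n f n` converges. -/
def MemSeries (f : ℕ → ℝ) : Prop := ∃ s, SeriesLim f s

/-- `σ_s(f) = ∑_{n=0}^∞ f n` (junk value `0` if the series does not converge). -/
def sigmaS (f : ℕ → ℝ) : ℝ := if h : ∃ s, SeriesLim f s then h.choose else 0

/-- `‖f‖_𝒔 = sup_m |∑_{n = m}^∞ f n|`, expressed via `σ_s(f)` minus partial sums. -/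
def sNorm (f : ℕ → ℝ) : ℝ≥0∞ :=
  ⨆ m : ℕ, ENNReal.ofReal |sigmaS f - ∑ n ∈ Finset.range m, f n|

/-- `D(f)(m)`: the `m`-th term (for `m ≥ 1`) of the nonincreasing rearrangement of `|f|`,
as an element of `[0,∞]`. -/
def Drearr (f : ℕ → ℝ) (m : ℕ) : ℝ≥0∞ :=
  sInf {t : ℝ≥0∞ | {n : ℕ | t < ENNReal.ofReal |f n|}.Finite ∧
    {n : ℕ | t < ENNReal.ofReal |f n|}.ncard < m}

/-- `ρ_{1,∞}(f,k) = sup_{m ≥ 1} m · D(f)(m+k) ∈ [0,∞]`. Note `ρ_{1,∞}(f,0) = ‖f‖_{1,∞}`. -/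
def rho (f : ℕ → ℝ) (k : ℕ) : ℝ≥0∞ :=
  ⨆ m : ℕ, ⨆ _ : 1 ≤ m, (m : ℝ≥0∞) * Drearr f (m + k)

/-- Membership in `h_{1,∞}`: `lim_m m · D(f)(m) = 0`. -/
def Memh1inf (f : ℕ → ℝ) : Prop :=
  Tendsto (fun m : ℕ => (m : ℝ≥0∞) * Drearr f m) atTop (nhds 0)

/-- A sequence of nonempty finite integer intervals which is right-dominant:
`max J_k < min J_{k+1}` for all `k`. -/
def RightDominant (J : ℕ → Finset ℕ) : Prop :=
  (∀ k : ℕ, ∃ a b : ℕ, a ≤ b ∧ J k = Finset.Icc a b) ∧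
  ∀ k : ℕ, ∀ n ∈ J k, ∀ m ∈ J (k + 1), n < m

/-- `g` is Leibnizian with admissible sequence `J`. -/
def Admissible (g : ℕ → ℝ) (J : ℕ → Finset ℕ) : Prop :=
  RightDominant J ∧
  (∀ n : ℕ, g n ≠ 0 → ∃ k, n ∈ J k) ∧
  (∀ k : ℕ, oneStar g (J (k + 1)) ≤ oneStar g (J k)) ∧
  (∀ k : ℕ, ∀ n ∈ J k, g n ≠ 0 → ∀ m ∈ J (k + 1), g m < g n)

end

/-!
Let `A` be a greedy set of `f + g` with `N` elements. Finiteness of `‖f‖_{1,∞}` and `‖g‖_{1,∞}`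
makes the superlevel sets of `|f|`, `|g|` finite, so `f` and `g` have greedy sets `B`, `C` with
`N` elements. On an interval `I`, the sum of `f + g` over `I \ A` differs from the sums of `f`
over `I \ B` and of `g` over `I \ C` only at points of `A ∪ B ∪ C`. At such a point the defect is
controlled by the values of `|f + g|`, `|f|`, `|g|` off `A`, `B`, `C`, which are at most the
`(N+1)`-st terms of the respective rearrangements, hence at most `‖·‖_{1,∞} / N`; each of the
three bounds is charged at most `2N` times.
-/

section Rearrangement

theorem mul_Drearr_le_rho (h : ℕ → ℝ) {m : ℕ} (hm : 1 ≤ m) :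
    (m : ℝ≥0∞) * Drearr h m ≤ rho h 0 :=
  le_iSup₂ (f := fun (k : ℕ) (_ : 1 ≤ k) => (k : ℝ≥0∞) * Drearr h (k + 0)) m hm

variable {h : ℕ → ℝ}

theorem finite_ncard_lt_of_Drearr_lt {m : ℕ} {s : ℝ≥0∞} (hs : Drearr h m < s) :
    {n | s ≤ ENNReal.ofReal |h n|}.Finite ∧ {n | s ≤ ENNReal.ofReal |h n|}.ncard < m := by
  obtain ⟨t, ⟨htfin, htcard⟩, hts⟩ := sInf_lt_iff.mp hs
  have hsub : {n | s ≤ ENNReal.ofReal |h n|} ⊆ {n | t < ENNReal.ofReal |h n|} :=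
    fun n hn => hts.trans_le hn
  exact ⟨htfin.subset hsub, (Set.ncard_le_ncard hsub htfin).trans_lt htcard⟩

theorem GreedySet.ofReal_abs_le_Drearr {A : Finset ℕ} (hA : GreedySet h A) {n : ℕ}
    (hn : n ∉ A) : ENNReal.ofReal |h n| ≤ Drearr h (A.card + 1) := by
  by_contra! hlt
  obtain ⟨hfin, hcard⟩ := finite_ncard_lt_of_Drearr_lt hlt
  have hsub : insert n (A : Set ℕ) ⊆ {k | ENNReal.ofReal |h n| ≤ ENNReal.ofReal |h k|} := by
    rintro k (rfl | hk)
    · exact le_refl (ENNReal.ofReal |h k|)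
    · exact ENNReal.ofReal_le_ofReal (hA k hk n hn)
  have := Set.ncard_le_ncard hsub hfin
  rw [Set.ncard_insert_of_notMem (by simpa using hn), Set.ncard_coe_finset] at this
  omega

theorem finite_setOf_le_abs_of_rho_ne_top (hρ : rho h 0 ≠ ⊤) {ε : ℝ} (hε : 0 < ε) :
    {n | ε ≤ |h n|}.Finite := by
  have hε' : ENNReal.ofReal ε ≠ 0 := (ENNReal.ofReal_pos.mpr hε).ne'
  obtain ⟨m, hm⟩ := ENNReal.exists_nat_gt (ENNReal.div_lt_top hρ hε').ne
  have hm1 : 1 ≤ m := Nat.one_le_iff_ne_zero.mpr (by rintro rfl; simp at hm)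
  have hD : Drearr h m < ENNReal.ofReal ε := by
    by_contra! hle
    have : (m : ℝ≥0∞) * ENNReal.ofReal ε ≤ rho h 0 :=
      calc (m : ℝ≥0∞) * ENNReal.ofReal ε ≤ m * Drearr h m := by gcongr
        _ ≤ rho h 0 := mul_Drearr_le_rho h hm1
    exact (ENNReal.div_lt_iff (.inl hε') (.inl ENNReal.ofReal_ne_top)).mp hm |>.not_ge this
  refine (finite_ncard_lt_of_Drearr_lt hD).1.subset fun n hn => ?_
  exact ENNReal.ofReal_le_ofReal hn

theorem GreedySet.exists_bound_compl (hρ : rho h 0 ≠ ⊤) {A : Finset ℕ} (hA : GreedySet h A) :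
    ∃ d : ℝ, 0 ≤ d ∧ (∀ n ∉ A, |h n| ≤ d) ∧ ENNReal.ofReal (A.card * d) ≤ rho h 0 := by
  have hρA := mul_Drearr_le_rho h (Nat.le_add_left 1 A.card)
  have hD : Drearr h (A.card + 1) ≠ ⊤ := by
    intro hD
    rw [hD, ENNReal.mul_top (by simp)] at hρA
    exact hρ (top_le_iff.mp hρA)
  refine ⟨(Drearr h (A.card + 1)).toReal, ENNReal.toReal_nonneg, fun n hn => ?_, ?_⟩
  · exact (ENNReal.ofReal_le_iff_le_toReal hD).mp (hA.ofReal_abs_le_Drearr hn)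
  · rw [ENNReal.ofReal_mul (by positivity), ENNReal.ofReal_natCast, ENNReal.ofReal_toReal hD]
    refine le_trans ?_ hρA
    gcongr
    exact_mod_cast Nat.le_succ _

end Rearrangement

section GreedySets

variable {h : ℕ → ℝ} (hfin : ∀ ε : ℝ, 0 < ε → {n | ε ≤ |h n|}.Finite)
include hfin

theorem exists_notMem_forall_abs_le (B : Finset ℕ) :
    ∃ n ∉ B, ∀ k ∉ B, |h k| ≤ |h n| := by
  obtain ⟨m, hm⟩ := B.exists_notMem
  by_cases hall : ∀ k ∉ B, |h k| ≤ |h m|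
  · exact ⟨m, hm, hall⟩
  push Not at hall
  obtain ⟨k, hkB, hk⟩ := hall
  have hT : ({n | |h k| ≤ |h n|} \ B).Finite :=
    (hfin _ ((abs_nonneg _).trans_lt hk)).sdiff
  obtain ⟨n, ⟨hkn, hnB⟩, hmax⟩ := Set.exists_max_image _ (fun n => |h n|) hT ⟨k, le_refl |h k|, hkB⟩
  refine ⟨n, hnB, fun j hjB => ?_⟩
  by_cases hkj : |h k| ≤ |h j|
  · exact hmax j ⟨hkj, hjB⟩
  · exact (not_le.mp hkj).le.trans hkn

theorem exists_greedySet_card (N : ℕ) : ∃ B : Finset ℕ, GreedySet h B ∧ B.card = N := by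
  induction N with
  | zero => exact ⟨∅, fun n hn => absurd hn (Finset.notMem_empty n), rfl⟩
  | succ N ih =>
    obtain ⟨B, hB, rfl⟩ := ih
    obtain ⟨n, hnB, hmax⟩ := exists_notMem_forall_abs_le hfin B
    refine ⟨insert n B, ?_, Finset.card_insert_of_notMem hnB⟩
    intro i hi k hk
    rw [Finset.mem_insert, not_or] at hk
    rcases Finset.mem_insert.mp hi with rfl | hi
    · exact hmax k hk.2
    · exact hB i hi k hk.2

end GreedySets

theorem sum_ite_mem_le_card {α : Type*} [DecidableEq α] (I S : Finset α) :
    ∑ n ∈ I, (if n ∈ S then (1 : ℝ) else 0) ≤ S.card := by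
  rw [Finset.sum_boole]
  exact_mod_cast Finset.card_le_card fun n hn => (Finset.mem_filter.mp hn).2

theorem abs_oneStar_add_sdiff_le {f g : ℕ → ℝ} {A B C : Finset ℕ} {x y z : ℝ}
    (hx₀ : 0 ≤ x) (hy₀ : 0 ≤ y) (hz₀ : 0 ≤ z)
    (hx : ∀ n ∉ A, |f n + g n| ≤ x) (hy : ∀ n ∉ B, |f n| ≤ y) (hz : ∀ n ∉ C, |g n| ≤ z)
    (I : Finset ℕ) :
    |oneStar (f + g) (I \ A)| ≤ |oneStar f (I \ B)| + |oneStar g (I \ C)| +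
      (x * (B.card + C.card) + y * (A.card + C.card) + z * (A.card + B.card)) := by
  set χ : Finset ℕ → ℕ → ℝ := fun S n => if n ∈ S then 1 else 0
  set e : ℕ → ℝ := fun n => (if n ∉ A then f n + g n else 0) - (if n ∉ B then f n else 0) -
    (if n ∉ C then g n else 0)
  have hsplit : oneStar (f + g) (I \ A) = oneStar f (I \ B) + oneStar g (I \ C) + ∑ n ∈ I, e n := by
    simp only [oneStar, Finset.sdiff_eq_filter, Finset.sum_filter, e, Finset.sum_sub_distrib,
      Pi.add_apply]
    ring
  -- e.g. for `n ∈ B \ (A ∪ C)`, `e n = f n = (f n + g n) - g n` is bounded by `x + z`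
  have he : ∀ n, |e n| ≤ x * (χ B n + χ C n) + y * (χ A n + χ C n) + z * (χ A n + χ B n) := by
    intro n
    by_cases hA : n ∈ A <;> by_cases hB : n ∈ B <;> by_cases hC : n ∈ C <;>
      simp only [e, χ, hA, hB, hC, not_true, not_false_eq_true, if_true, if_false] <;>
      (try have := abs_le.mp (hx n hA)) <;> (try have := abs_le.mp (hy n hB)) <;>
      (try have := abs_le.mp (hz n hC)) <;>
      rw [abs_le] <;> constructor <;> linarith
  calc |oneStar (f + g) (I \ A)|
      ≤ |oneStar f (I \ B)| + |oneStar g (I \ C)| + ∑ n ∈ I, |e n| := by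
        rw [hsplit]
        exact (abs_add_le _ _).trans (add_le_add (abs_add_le _ _) (Finset.abs_sum_le_sum_abs _ _))
    _ ≤ |oneStar f (I \ B)| + |oneStar g (I \ C)| +
        ∑ n ∈ I, (x * (χ B n + χ C n) + y * (χ A n + χ C n) + z * (χ A n + χ B n)) := by
        gcongr with n; exact he n
    _ ≤ _ := by
        simp only [Finset.sum_add_distrib, ← Finset.mul_sum]
        gcongr <;> exact sum_ite_mem_le_card I _

theorem ofReal_abs_oneStar_le_beta (h : ℕ → ℝ) (B : Finset ℕ) (a b : ℕ) :
    ENNReal.ofReal |oneStar h (Finset.Icc a b \ B)| ≤ beta h B :=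
  le_iSup₂ (f := fun a b => ENNReal.ofReal |oneStar h (Finset.Icc a b \ B)|) a b

theorem GreedySet.beta_le_BNorm {h : ℕ → ℝ} {B : Finset ℕ} (hB : GreedySet h B) :
    beta h B ≤ BNorm h :=
  le_iSup₂ (f := fun A (_ : A ∈ {A : Finset ℕ | GreedySet h A}) => beta h A) B hB

/-- `‖f+g‖_𝔹 ≤ 2·(‖f+g‖_{1,∞} + ‖f‖_{1,∞} + ‖g‖_{1,∞}) + ‖f‖_𝔹 + ‖g‖_𝔹`
in `[0,∞]`, where `‖·‖_{1,∞} = ρ_{1,∞}(·,0)`. -/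
theorem stmt_10 (f g : ℕ → ℝ) :
    BNorm (f + g) ≤ 2 * (rho (f + g) 0 + rho f 0 + rho g 0) + BNorm f + BNorm g := by
  by_cases htop : rho (f + g) 0 = ⊤ ∨ rho f 0 = ⊤ ∨ rho g 0 = ⊤
  · rcases htop with h | h | h <;> simp [h]
  push Not at htop
  obtain ⟨hfg, hf, hg⟩ := htop
  refine iSup₂_le fun A hA => iSup₂_le fun a b => ?_
  obtain ⟨B, hB, hBA⟩ :=
    exists_greedySet_card (fun _ => finite_setOf_le_abs_of_rho_ne_top hf) A.card
  obtain ⟨C, hC, hCA⟩ :=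
    exists_greedySet_card (fun _ => finite_setOf_le_abs_of_rho_ne_top hg) A.card
  obtain ⟨x, hx₀, hx, hxρ⟩ := GreedySet.exists_bound_compl hfg hA
  obtain ⟨y, hy₀, hy, hyρ⟩ := hB.exists_bound_compl hf
  obtain ⟨z, hz₀, hz, hzρ⟩ := hC.exists_bound_compl hg
  have key := abs_oneStar_add_sdiff_le hx₀ hy₀ hz₀ hx hy hz (Finset.Icc a b)
  simp only [hBA, hCA] at key hyρ hzρ
  set N : ℝ := (A.card : ℝ)
  calc ENNReal.ofReal |oneStar (f + g) (Finset.Icc a b \ A)|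
      ≤ ENNReal.ofReal (|oneStar f (Finset.Icc a b \ B)| + |oneStar g (Finset.Icc a b \ C)| +
          2 * (N * x + N * y + N * z)) := ENNReal.ofReal_le_ofReal (by linarith)
    _ = ENNReal.ofReal |oneStar f (Finset.Icc a b \ B)| +
          ENNReal.ofReal |oneStar g (Finset.Icc a b \ C)| +
          2 * (ENNReal.ofReal (N * x) + ENNReal.ofReal (N * y) + ENNReal.ofReal (N * z)) := by
        rw [ENNReal.ofReal_add (by positivity) (by positivity),
          ENNReal.ofReal_add (by positivity) (by positivity), ENNReal.ofReal_mul zero_le_two,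
          ENNReal.ofReal_add (by positivity) (by positivity),
          ENNReal.ofReal_add (by positivity) (by positivity), ENNReal.ofReal_ofNat]
    _ ≤ BNorm f + BNorm g + 2 * (rho (f + g) 0 + rho f 0 + rho g 0) := by
        gcongr
        · exact (ofReal_abs_oneStar_le_beta f B a b).trans hB.beta_le_BNorm
        · exact (ofReal_abs_oneStar_le_beta g C a b).trans hC.beta_le_BNorm
    _ = _ := by ring
end

section
/- If f ∈ 𝔹₀, then: the series ∑_n f(n) converges (so f ∈ 𝒔); f ∈ 𝔸; max{‖f‖_𝒔, ‖f‖_𝔸} ≤ ‖f‖_𝔹; and σ_g(f) = σ_s(f) = ∑_{n=1}^∞ f(n). -/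
open Filter ENNReal
open scoped Classical

section Aux

open Finset

lemma greedy_empty (f : ℕ → ℝ) : GreedySet f ∅ := by
  intro n hn; simp at hn

lemma greedy_union {f : ℕ → ℝ} {A B : Finset ℕ} (hA : GreedySet f A) (hB : GreedySet f B) :
    GreedySet f (A ∪ B) := by
  intro n hn k hk
  rcases Finset.mem_union.mp hn with h | h
  · exact hA n h k (fun hkA => hk (Finset.mem_union_left _ hkA))
  · exact hB n h k (fun hkB => hk (Finset.mem_union_right _ hkB))

lemma ofReal_abs_le_beta (f : ℕ → ℝ) (A : Finset ℕ) (a b : ℕ) :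
    ENNReal.ofReal |oneStar f (Finset.Icc a b \ A)| ≤ beta f A :=
  le_trans (le_iSup (fun b => ENNReal.ofReal |oneStar f (Finset.Icc a b \ A)|) b)
    (le_iSup (fun a => ⨆ b, ENNReal.ofReal |oneStar f (Finset.Icc a b \ A)|) a)

lemma abs_lt_of_beta_lt {f : ℕ → ℝ} {B : Finset ℕ} {ε : ℝ} (hε : 0 < ε)
    (h : beta f B < ENNReal.ofReal ε) (a b : ℕ) :
    |oneStar f (Finset.Icc a b \ B)| < ε := by
  have := lt_of_le_of_lt (ofReal_abs_le_beta f B a b) h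
  exact (ENNReal.ofReal_lt_ofReal_iff hε).mp this

lemma beta_le_BNorm {f : ℕ → ℝ} {A : Finset ℕ} (hA : GreedySet f A) : beta f A ≤ BNorm f :=
  le_iSup₂ (f := fun A (_ : A ∈ {A : Finset ℕ | GreedySet f A}) => beta f A) A hA

lemma Icc_sdiff_eq {A : Finset ℕ} {a b : ℕ} (h : ∀ x ∈ A, x < a) :
    Finset.Icc a b \ A = Finset.Icc a b := by
  rw [Finset.sdiff_eq_self_iff_disjoint]
  rw [Finset.disjoint_left]
  intro x hx hxA
  exact absurd (Finset.mem_Icc.mp hx).1 (not_le.mpr (h x hxA))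

lemma range_succ_eq_Icc (c : ℕ) : Finset.range (c + 1) = Finset.Icc 0 c := by
  ext x; simp [Nat.lt_succ_iff]

lemma greedyLim_unique {f : ℕ → ℝ} {s t : ℝ} (hs : GreedyLim f s) (ht : GreedyLim f t) :
    s = t := by
  apply eq_of_forall_dist_le
  intro ε hε
  obtain ⟨A, hA, hA2⟩ := hs (ε / 2) (half_pos hε)
  obtain ⟨A', hA', hA2'⟩ := ht (ε / 2) (half_pos hε)
  have hU : GreedySet f (A ∪ A') := greedy_union hA hA'
  have h1 := hA2 (A ∪ A') hU Finset.subset_union_left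
  have h2 := hA2' (A ∪ A') hU Finset.subset_union_right
  rw [Real.dist_eq]
  have := abs_sub_le s (oneStar f (A ∪ A')) t
  rw [abs_sub_comm s (oneStar f (A ∪ A'))] at this
  linarith

lemma memSeries_of_memB0 {f : ℕ → ℝ} (hf : MemB0 f) : MemSeries f := by
  have hC : CauchySeq (fun m => ∑ n ∈ Finset.range m, f n) := by
    rw [Metric.cauchySeq_iff']
    intro ε hε
    obtain ⟨A, hA, hA2⟩ := hf.2 ε hε
    have hβ : beta f A < ENNReal.ofReal ε := hA2 A hA (subset_refl A)
    refine ⟨A.sup id + 1, ?_⟩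
    intro n hn
    set N := A.sup id + 1 with hN
    rcases eq_or_lt_of_le hn with h | hlt
    · rw [← h]; simpa using hε
    · obtain ⟨c, rfl⟩ := Nat.exists_eq_add_of_lt hlt
      have hsub : ∑ k ∈ Finset.range (N + c + 1), f k - ∑ k ∈ Finset.range N, f k
          = oneStar f (Finset.Icc N (N + c)) := by
        rw [oneStar, ← Finset.Ico_add_one_right_eq_Icc,
          Finset.sum_Ico_eq_sub _ (by omega : N ≤ N + c + 1)]
      have hd : Finset.Icc N (N + c) \ A = Finset.Icc N (N + c) := by
        apply Icc_sdiff_eq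
        intro x hx
        have : x ≤ A.sup id := Finset.le_sup (f := id) hx
        omega
      rw [Real.dist_eq, hsub]
      have := abs_lt_of_beta_lt hε hβ N (N + c)
      rwa [hd] at this
  exact cauchySeq_tendsto_of_complete hC

lemma seriesLim_sigmaS {f : ℕ → ℝ} (hf : MemSeries f) : SeriesLim f (sigmaS f) := by
  have hf' : ∃ s, SeriesLim f s := hf
  rw [sigmaS, dif_pos hf']
  exact hf'.choose_spec

lemma greedyLim_sigmaS {f : ℕ → ℝ} (hf : MemB0 f) : GreedyLim f (sigmaS f) := by
  have hS : SeriesLim f (sigmaS f) := seriesLim_sigmaS (memSeries_of_memB0 hf)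
  intro ε hε
  obtain ⟨A, hA, hA2⟩ := hf.2 (ε / 2) (half_pos hε)
  refine ⟨A, hA, ?_⟩
  intro B hB hAB
  obtain ⟨M, hM⟩ := (Metric.tendsto_atTop.mp hS) (ε / 2) (half_pos hε)
  set c := max M (B.sup id) with hc
  set m := c + 1 with hm
  have hBr : B ⊆ Finset.range m := by
    intro x hx
    have : x ≤ B.sup id := Finset.le_sup (f := id) hx
    simp only [Finset.mem_range]
    omega
  have hsum : ∑ n ∈ Finset.range m, f n - oneStar f B
      = oneStar f (Finset.range m \ B) := by
    have := Finset.sum_sdiff (f := f) hBr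
    rw [oneStar, oneStar]
    linarith
  have hβ := abs_lt_of_beta_lt (half_pos hε) (hA2 B hB hAB) 0 c
  rw [← range_succ_eq_Icc, ← hm, ← hsum] at hβ
  have h2 : |∑ n ∈ Finset.range m, f n - sigmaS f| < ε / 2 := by
    have := hM m (by omega)
    rwa [Real.dist_eq] at this
  have h3 := abs_sub_le (oneStar f B) (∑ n ∈ Finset.range m, f n) (sigmaS f)
  rw [abs_sub_comm (oneStar f B) (∑ n ∈ Finset.range m, f n)] at h3
  linarith

end Aux

/-- if `f ∈ 𝔹₀` then the series `∑_n f n` converges (`f ∈ 𝒔`), `f ∈ 𝔸`,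
`max{‖f‖_𝒔, ‖f‖_𝔸} ≤ ‖f‖_𝔹`, and `σ_g(f) = σ_s(f) = ∑_{n=0}^∞ f n`. -/
theorem stmt_12 (f : ℕ → ℝ) (hf : MemB0 f) :
    MemSeries f ∧ MemA f ∧ max (sNorm f) (ANorm f) ≤ BNorm f ∧
    sigmaG f = sigmaS f ∧ SeriesLim f (sigmaS f) := by
  have hmem : MemSeries f := memSeries_of_memB0 hf
  have hS : SeriesLim f (sigmaS f) := seriesLim_sigmaS hmem
  have hG : GreedyLim f (sigmaS f) := greedyLim_sigmaS hf
  have hex : ∃ s, GreedyLim f s := ⟨sigmaS f, hG⟩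
  have hsg : sigmaG f = sigmaS f := by
    rw [sigmaG, dif_pos hex]
    exact greedyLim_unique hex.choose_spec hG
  refine ⟨hmem, ⟨hf.1, hex⟩, ?_, hsg, hS⟩
  apply max_le
  · refine iSup_le fun m => ?_
    have hten : Tendsto (fun c : ℕ =>
        ENNReal.ofReal |∑ n ∈ Finset.range (m + c + 1), f n - ∑ n ∈ Finset.range m, f n|)
        atTop (nhds (ENNReal.ofReal |sigmaS f - ∑ n ∈ Finset.range m, f n|)) := by
      apply (ENNReal.continuous_ofReal.tendsto _).comp
      apply Tendsto.abs
      apply Tendsto.sub_const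
      exact hS.comp (tendsto_atTop_mono (fun c => by omega : ∀ c : ℕ, c ≤ m + c + 1) tendsto_id)
    refine le_of_tendsto' hten fun c => ?_
    have heq : ∑ n ∈ Finset.range (m + c + 1), f n - ∑ n ∈ Finset.range m, f n
        = oneStar f (Finset.Icc m (m + c) \ ∅) := by
      rw [Finset.sdiff_empty, oneStar, ← Finset.Ico_add_one_right_eq_Icc,
        Finset.sum_Ico_eq_sub _ (by omega : m ≤ m + c + 1)]
    rw [heq]
    exact le_trans (ofReal_abs_le_beta f ∅ m (m + c)) (beta_le_BNorm (greedy_empty f))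
  · refine iSup₂_le fun A hA => ?_
    rw [hsg]
    set N := A.sup id with hN
    have hten : Tendsto (fun c : ℕ =>
        ENNReal.ofReal |∑ n ∈ Finset.range (N + c + 1), f n - oneStar f A|)
        atTop (nhds (ENNReal.ofReal |sigmaS f - oneStar f A|)) := by
      apply (ENNReal.continuous_ofReal.tendsto _).comp
      apply Tendsto.abs
      apply Tendsto.sub_const
      exact hS.comp (tendsto_atTop_mono (fun c => by omega : ∀ c : ℕ, c ≤ N + c + 1) tendsto_id)
    refine le_of_tendsto' hten fun c => ?_
    have hAr : A ⊆ Finset.range (N + c + 1) := by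
      intro x hx
      have : x ≤ A.sup id := Finset.le_sup (f := id) hx
      simp only [Finset.mem_range]; omega
    have heq : ∑ n ∈ Finset.range (N + c + 1), f n - oneStar f A
        = oneStar f (Finset.Icc 0 (N + c) \ A) := by
      rw [← range_succ_eq_Icc]
      have := Finset.sum_sdiff (f := f) hAr
      rw [oneStar, oneStar]
      linarith
    rw [heq]
    exact le_trans (ofReal_abs_le_beta f A 0 (N + c)) (beta_le_BNorm hA)
end

section
/- There exists h : ℕ → ℝ with h ∈ 𝔸 ∩ 𝒔 and ‖h‖_𝔹 = ∞; in particular, 𝔸 ∩ 𝒔 is not contained in 𝔹. -/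
open Filter ENNReal
open scoped Classical

/-!
Block `k ≥ 1` of the counterexample sits at the positions `32 ^ k + r`, `r < 4 N`, `N = 16 ^ k`.
Its first half alternates `x_i, -y_i` (`i < N`; `x_i = mag k (2 i)`, `y_i = mag k (2 i + 1)`)
with distinct magnitudes in `[4⁻ᵏ, 2 · 4⁻ᵏ)`, every `x_i` above every `y_j` and
`x_i - y_i = 4⁻ᵏ / (4 N)`; its second half is the negated first half.

Every nonzero modulus is therefore taken exactly twice, with opposite signs. On a greedy set these
pairs cancel except at the smallest modulus, so greedy sums are at most twice the smallest modulus
and the greedy net converges to `0`. Inside block `k` the partial sums of the series stay below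
`3 · 4⁻ᵏ`, and each block sums to `0`. Finally, removing from the first half of block `k` the
greedy set of all entries above the `y`'s leaves `-y_0, …, -y_{N-1}`, whose sum is at most
`-N · 4⁻ᵏ = -4ᵏ`.
-/

def PairedLevels (f : ℕ → ℝ) : Prop :=
  ∀ n, f n ≠ 0 → ∃ m, f m = -f n ∧ ∀ l, |f l| = |f n| → l = n ∨ l = m

section Greedy

variable {f : ℕ → ℝ}

lemma greedySet_filter_range {t : ℝ} {M : ℕ} (hM : ∀ n ≥ M, |f n| ≤ t) :
    GreedySet f ((Finset.range M).filter fun n => t < |f n|) := by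
  intro n hn k hk
  simp only [Finset.mem_filter, Finset.mem_range, not_and, not_lt] at hn hk
  rcases lt_or_ge k M with hkM | hkM
  · linarith [hk hkM]
  · linarith [hM k hkM]

lemma ofReal_abs_oneStar_le_BNorm {A : Finset ℕ} (hA : GreedySet f A) (a b : ℕ) :
    ENNReal.ofReal |oneStar f (Finset.Icc a b \ A)| ≤ BNorm f :=
  le_iSup₂_of_le (f := fun A _ => beta f A) A hA (le_iSup_of_le a (le_iSup_of_le b le_rfl))

lemma BNorm_eq_top_of_forall_le
    (h : ∀ x : ℝ, ∃ A, GreedySet f A ∧ ∃ a b, x ≤ |oneStar f (Finset.Icc a b \ A)|) :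
    BNorm f = ⊤ := by
  refine ENNReal.eq_top_of_forall_nnreal_le fun r => ?_
  obtain ⟨A, hA, a, b, hr⟩ := h r
  rw [← ENNReal.ofReal_coe_nnreal]
  exact (ENNReal.ofReal_le_ofReal hr).trans (ofReal_abs_oneStar_le_BNorm hA a b)

namespace PairedLevels

/-- The pairs above the smallest modulus in `B` lie in `B` together and cancel. -/
lemma abs_oneStar_le (hf : PairedLevels f) {B : Finset ℕ} (hB : GreedySet f B) {n : ℕ}
    (hn : n ∈ B) : |oneStar f B| ≤ 2 * |f n| := by
  choose! φ hφ hlevel using hf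
  have hφφ : ∀ a, f a ≠ 0 → φ (φ a) = a := fun a ha =>
    ((hlevel (φ a) (by simpa [hφ a ha] using ha) a (by rw [hφ a ha, abs_neg])).resolve_left
      fun h => ha (by linarith [hφ a ha, congrArg f h])).symm
  obtain ⟨n₀, hn₀, hmin⟩ := B.exists_min_image (fun m => |f m|) ⟨n, hn⟩
  set t := |f n₀|
  have hupper : ∑ m ∈ B with t < |f m|, f m = 0 := by
    have hne : ∀ a ∈ B.filter (fun m => t < |f m|), f a ≠ 0 := fun a ha h0 => by
      have := (Finset.mem_filter.1 ha).2
      rw [h0, abs_zero] at this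
      linarith [abs_nonneg (f n₀)]
    refine Finset.sum_involution (fun a _ => φ a) (fun a ha => by simp [hφ a (hne a ha)])
      (fun a ha _ h => hne a ha (by linarith [hφ a (hne a ha), congrArg f h]))
      (fun a ha => ?_) (fun a ha => hφφ a (hne a ha))
    have ha' := Finset.mem_filter.1 ha
    have habs : |f (φ a)| = |f a| := by rw [hφ a (hne a ha), abs_neg]
    refine Finset.mem_filter.2 ⟨?_, habs ▸ ha'.2⟩
    by_contra hout
    linarith [hB n₀ hn₀ (φ a) hout, ha'.2]
  have hlower : |∑ m ∈ B with ¬ t < |f m|, f m| ≤ 2 * t := by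
    set L := B.filter fun m => ¬ t < |f m|
    have hL : ∀ m ∈ L, |f m| = t := fun m hm => by
      rw [Finset.mem_filter, not_lt] at hm
      exact le_antisymm hm.2 (hmin m hm.1)
    calc |∑ m ∈ L, f m| ≤ ∑ m ∈ L, |f m| := Finset.abs_sum_le_sum_abs _ _
      _ = L.card * t := by rw [Finset.sum_congr rfl hL, Finset.sum_const, nsmul_eq_mul]
      _ ≤ 2 * t := by
        rcases (abs_nonneg (f n₀)).eq_or_lt with ht | ht
        · simp [t, ← ht]
        have hsub : L ⊆ {n₀, φ n₀} := fun m hm => by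
          rcases hlevel n₀ (abs_pos.1 ht) m (hL m hm) with rfl | rfl <;> simp
        gcongr
        exact_mod_cast (Finset.card_le_card hsub).trans Finset.card_le_two
  rw [oneStar, ← Finset.sum_filter_add_sum_filter_not B (fun m => t < |f m|), hupper, zero_add]
  linarith [hmin n hn]

lemma greedyLim_zero (hf : PairedLevels f) (h0 : Memc0 f) (hsupp : ∃ᶠ n in atTop, f n ≠ 0) :
    GreedyLim f 0 := by
  intro ε hε
  have habs : Tendsto (fun n => |f n|) atTop (nhds 0) := by simpa using h0.abs
  obtain ⟨n₀, hn₀, hsmall⟩ :=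
    (hsupp.and_eventually (habs.eventually_lt_const (half_pos hε))).exists
  have ht : 0 < |f n₀| / 2 := by positivity
  obtain ⟨M, hM⟩ := eventually_atTop.1 (habs.eventually_lt_const ht)
  have hn₀M : n₀ < M := by
    by_contra h
    linarith [hM n₀ (not_lt.1 h)]
  refine ⟨_, greedySet_filter_range fun n hn => (hM n hn).le, fun B hB hAB => ?_⟩
  have hn₀B : n₀ ∈ B := hAB (by simp [hn₀M, abs_pos.2 hn₀])
  rw [sub_zero]
  linarith [hf.abs_oneStar_le hB hn₀B]

lemma memA (hf : PairedLevels f) (h0 : Memc0 f) (hsupp : ∃ᶠ n in atTop, f n ≠ 0) : MemA f :=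
  ⟨h0, 0, hf.greedyLim_zero h0 hsupp⟩

end PairedLevels

end Greedy

namespace Counterexample

def size (k : ℕ) : ℕ := 16 ^ k

noncomputable def base (k : ℕ) : ℝ := 4⁻¹ ^ k

def level (k q : ℕ) : ℕ := if Even q then 2 * size k - q / 2 else size k - q / 2

noncomputable def mag (k q : ℕ) : ℝ := base k * (1 + level k q / (4 * size k ^ 2))

noncomputable def firstHalf (k q : ℕ) : ℝ := (-1) ^ q * mag k q

noncomputable def block (k r : ℕ) : ℝ :=
  if k = 0 then 0
  else if r < 2 * size k then firstHalf k r
  else if r < 4 * size k then -firstHalf k (r - 2 * size k)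
  else 0

noncomputable def seq (n : ℕ) : ℝ := block (Nat.log 32 n) (n - 32 ^ Nat.log 32 n)

lemma size_pos (k : ℕ) : 0 < size k := Nat.pow_pos (by norm_num)

lemma base_pos (k : ℕ) : 0 < base k := by unfold base; positivity

lemma size_mul_base (k : ℕ) : (size k : ℝ) * base k = 4 ^ k := by
  rw [size, base, Nat.cast_pow, ← mul_pow]
  norm_num

lemma two_mul_base_succ (k : ℕ) : 2 * base (k + 1) = base k / 2 := by
  rw [base, base, pow_succ]
  ring

lemma base_anti {k j : ℕ} (h : k ≤ j) : base j ≤ base k :=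
  pow_le_pow_of_le_one (by norm_num) (by norm_num) h

lemma tendsto_base : Tendsto base atTop (nhds 0) :=
  tendsto_pow_atTop_nhds_zero_of_lt_one (by norm_num) (by norm_num)

lemma level_le (k q : ℕ) : level k q ≤ 2 * size k := by
  unfold level
  split <;> omega

lemma level_injOn {k q q' : ℕ} (hq : q < 2 * size k) (hq' : q' < 2 * size k)
    (h : level k q = level k q') : q = q' := by
  unfold level at h
  split_ifs at h with h₁ h₂ h₂ <;>
    simp only [Nat.even_iff] at h₁ h₂ <;> omega

lemma size_lt_level_iff {k q : ℕ} (hq : q < 2 * size k) : size k < level k q ↔ Even q := by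
  unfold level
  split <;> simp_all only [iff_true, iff_false] <;> omega

lemma base_le_mag (k q : ℕ) : base k ≤ mag k q := by
  unfold mag
  have := base_pos k
  have : (0 : ℝ) ≤ level k q / (4 * size k ^ 2) := by positivity
  nlinarith

lemma mag_lt_two_mul_base (k q : ℕ) : mag k q < 2 * base k := by
  have hN : (1 : ℝ) ≤ size k := by exact_mod_cast size_pos k
  have hL : (level k q : ℝ) ≤ 2 * size k := by exact_mod_cast level_le k q
  have : (level k q : ℝ) / (4 * size k ^ 2) < 1 := by
    rw [div_lt_one (by positivity)]
    nlinarith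
  unfold mag
  nlinarith [base_pos k]

lemma mag_injOn {k k' q q' : ℕ} (hq : q < 2 * size k) (hq' : q' < 2 * size k')
    (h : mag k q = mag k' q') : k = k' ∧ q = q' := by
  have hk : k = k' := by
    have separated : ∀ {j j' p p'}, j < j' → mag j' p' < mag j p := fun {j j' p p'} hjj' =>
      calc mag j' p' < 2 * base j' := mag_lt_two_mul_base j' p'
        _ ≤ 2 * base (j + 1) := by gcongr; exact base_anti hjj'
        _ < base j := by rw [two_mul_base_succ]; linarith [base_pos j]
        _ ≤ mag j p := base_le_mag j p
    rcases lt_trichotomy k k' with hlt | heq | hgt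
    · exact absurd h (separated hlt).ne'
    · exact heq
    · exact absurd h (separated hgt).ne
  subst hk
  refine ⟨rfl, level_injOn hq hq' ?_⟩
  have hD : (0 : ℝ) < 4 * size k ^ 2 := by have := size_pos k; positivity
  have h' := add_left_cancel (mul_left_cancel₀ (base_pos k).ne' h)
  exact_mod_cast (div_left_inj' hD.ne').1 h'

lemma abs_firstHalf (k q : ℕ) : |firstHalf k q| = mag k q := by
  rw [firstHalf, abs_mul, abs_pow, abs_neg, abs_one, one_pow, one_mul,
    abs_of_pos ((base_pos k).trans_le (base_le_mag k q))]

lemma firstHalf_two_mul (k i : ℕ) : firstHalf k (2 * i) = mag k (2 * i) := by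
  rw [firstHalf, (even_two_mul i).neg_one_pow, one_mul]

lemma firstHalf_two_mul_add_one (k i : ℕ) : firstHalf k (2 * i + 1) = -mag k (2 * i + 1) := by
  rw [firstHalf, (odd_two_mul_add_one i).neg_one_pow, neg_one_mul]

lemma firstHalf_two_mul_add_firstHalf {k i : ℕ} (hi : i < size k) :
    firstHalf k (2 * i) + firstHalf k (2 * i + 1) = base k / (4 * size k) := by
  have hlevel : (level k (2 * i) : ℝ) = level k (2 * i + 1) + size k := by
    unfold level
    rw [if_pos (even_two_mul i), if_neg (Nat.not_even_iff_odd.2 (odd_two_mul_add_one i))]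
    exact_mod_cast (by omega : 2 * size k - 2 * i / 2 = size k - (2 * i + 1) / 2 + size k)
  have hN : (0 : ℝ) < size k := by exact_mod_cast size_pos k
  rw [firstHalf_two_mul, firstHalf_two_mul_add_one, mag, mag, hlevel]
  field_simp
  ring

lemma sum_range_firstHalf_two_mul {k i : ℕ} (hi : i ≤ size k) :
    ∑ q ∈ Finset.range (2 * i), firstHalf k q = i * (base k / (4 * size k)) := by
  induction i with
  | zero => simp
  | succ i ih =>
    rw [show 2 * (i + 1) = 2 * i + 1 + 1 by ring, Finset.sum_range_succ, Finset.sum_range_succ,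
      add_assoc, firstHalf_two_mul_add_firstHalf (by omega), ih (by omega)]
    push_cast
    ring

lemma sum_range_firstHalf_mem_Icc {k t : ℕ} (ht : t ≤ 2 * size k) :
    ∑ q ∈ Finset.range t, firstHalf k q ∈ Set.Icc 0 (3 * base k) := by
  have hN : (0 : ℝ) < size k := by exact_mod_cast size_pos k
  have hb := base_pos k
  have hpairs : ∀ i ≤ size k, 0 ≤ (i : ℝ) * (base k / (4 * size k)) ∧
      (i : ℝ) * (base k / (4 * size k)) ≤ base k := fun i hi => by
    refine ⟨by positivity, ?_⟩
    calc (i : ℝ) * (base k / (4 * size k)) ≤ size k * (base k / (4 * size k)) := by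
          gcongr
      _ = base k / 4 := by field_simp
      _ ≤ base k := by linarith
  obtain ⟨i, rfl | rfl⟩ := Nat.even_or_odd' t
  · rw [sum_range_firstHalf_two_mul (by omega)]
    obtain ⟨h₀, h₁⟩ := hpairs i (by omega)
    exact ⟨h₀, by linarith⟩
  · rw [Finset.sum_range_succ, sum_range_firstHalf_two_mul (by omega), firstHalf_two_mul]
    obtain ⟨h₀, h₁⟩ := hpairs i (by omega)
    exact ⟨by linarith [base_le_mag k (2 * i)], by linarith [mag_lt_two_mul_base k (2 * i)]⟩

lemma block_zero_left (r : ℕ) : block 0 r = 0 := rfl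

lemma block_of_lt {k r : ℕ} (hk : k ≠ 0) (hr : r < 2 * size k) : block k r = firstHalf k r := by
  simp [block, hk, hr]

lemma block_two_size_add {k q : ℕ} (hk : k ≠ 0) (hq : q < 2 * size k) :
    block k (2 * size k + q) = -firstHalf k q := by
  simp [block, hk, show 2 * size k + q < 4 * size k by omega]

lemma block_of_le {k r : ℕ} (hr : 4 * size k ≤ r) : block k r = 0 := by
  simp [block, show ¬r < 2 * size k by omega, show ¬r < 4 * size k by omega]

lemma abs_block_le (k r : ℕ) : |block k r| ≤ 2 * base k := by
  have := base_pos k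
  unfold block
  split_ifs <;> simp only [abs_neg, abs_firstHalf, abs_zero] <;>
    linarith [mag_lt_two_mul_base k r, mag_lt_two_mul_base k (r - 2 * size k)]

lemma sum_range_block_two_size_add {k j : ℕ} (hk : k ≠ 0) (hj : j ≤ 2 * size k) :
    ∑ r ∈ Finset.range (2 * size k + j), block k r =
      ∑ q ∈ Finset.range (2 * size k), firstHalf k q -
        ∑ q ∈ Finset.range j, firstHalf k q := by
  rw [Finset.sum_range_add, sub_eq_add_neg, ← Finset.sum_neg_distrib]
  congr 1
  · exact Finset.sum_congr rfl fun r hr => block_of_lt hk (Finset.mem_range.1 hr)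
  · refine Finset.sum_congr rfl fun q hq => block_two_size_add hk ?_
    rw [Finset.mem_range] at hq
    omega

lemma sum_range_block_of_le {k t : ℕ} (ht : 4 * size k ≤ t) :
    ∑ r ∈ Finset.range t, block k r = 0 := by
  rcases eq_or_ne k 0 with rfl | hk
  · simp [block_zero_left]
  obtain ⟨j, rfl⟩ := Nat.exists_eq_add_of_le ht
  rw [Finset.sum_range_add, show 4 * size k = 2 * size k + 2 * size k by ring,
    sum_range_block_two_size_add hk le_rfl, sub_self, zero_add]
  exact Finset.sum_eq_zero fun r _ => block_of_le (by omega)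

lemma abs_sum_range_block_le (k t : ℕ) :
    |∑ r ∈ Finset.range t, block k r| ≤ 3 * base k := by
  have hb := base_pos k
  rcases eq_or_ne k 0 with rfl | hk
  · simp [block_zero_left, hb.le]
  rcases le_or_gt t (2 * size k) with ht | ht
  · rw [Finset.sum_congr rfl fun r hr => block_of_lt hk ((Finset.mem_range.1 hr).trans_le ht)]
    obtain ⟨h₀, h₁⟩ := sum_range_firstHalf_mem_Icc ht
    exact abs_le.2 ⟨by linarith, h₁⟩
  rcases le_or_gt (4 * size k) t with ht' | ht'
  · rw [sum_range_block_of_le ht', abs_zero]; positivity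
  obtain ⟨j, rfl⟩ := Nat.exists_eq_add_of_le ht.le
  rw [sum_range_block_two_size_add hk (by omega)]
  obtain ⟨h₀, h₁⟩ := sum_range_firstHalf_mem_Icc (k := k) le_rfl
  obtain ⟨h₂, h₃⟩ := sum_range_firstHalf_mem_Icc (k := k) (t := j) (by omega)
  exact abs_le.2 ⟨by linarith, by linarith⟩

lemma four_mul_size_lt (k : ℕ) : 4 * size k < 31 * 32 ^ k := by
  have : size k ≤ 32 ^ k := Nat.pow_le_pow_left (by norm_num) k
  have := size_pos k
  omega

lemma seq_pow_add {k r : ℕ} (hr : r < 31 * 32 ^ k) : seq (32 ^ k + r) = block k r := by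
  have hlog : Nat.log 32 (32 ^ k + r) = k :=
    Nat.log_eq_of_pow_le_of_lt_pow (Nat.le_add_right _ _) (by rw [pow_succ]; omega)
  rw [seq, hlog, Nat.add_sub_cancel_left]

lemma seq_first {k q : ℕ} (hk : k ≠ 0) (hq : q < 2 * size k) :
    seq (32 ^ k + q) = firstHalf k q := by
  rw [seq_pow_add (by linarith [four_mul_size_lt k]), block_of_lt hk hq]

lemma seq_second {k q : ℕ} (hk : k ≠ 0) (hq : q < 2 * size k) :
    seq (32 ^ k + 2 * size k + q) = -firstHalf k q := by
  rw [add_assoc, seq_pow_add (by linarith [four_mul_size_lt k]), block_two_size_add hk hq]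

lemma exists_of_seq_ne_zero {n : ℕ} (hn : seq n ≠ 0) : ∃ k q, k ≠ 0 ∧ q < 2 * size k ∧
    (n = 32 ^ k + q ∨ n = 32 ^ k + 2 * size k + q) := by
  set k := Nat.log 32 n with hkdef
  have hseq : seq n = block k (n - 32 ^ k) := rfl
  have hk : k ≠ 0 := fun h => hn (by rw [hseq, h, block_zero_left])
  have hle : 32 ^ k ≤ n := Nat.pow_log_le_self 32 fun h => hk (by simp [hkdef, h])
  have hr : n - 32 ^ k < 4 * size k := by
    by_contra h
    exact hn (by rw [hseq, block_of_le (not_lt.1 h)])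
  rcases lt_or_ge (n - 32 ^ k) (2 * size k) with h | h
  · exact ⟨k, n - 32 ^ k, hk, h, Or.inl (by omega)⟩
  · exact ⟨k, n - 32 ^ k - 2 * size k, hk, by omega, Or.inr (by omega)⟩

lemma abs_seq_le (n : ℕ) : |seq n| ≤ 2 * base (Nat.log 32 n) := abs_block_le _ _

lemma abs_seq_le_of_le {k n : ℕ} (hn : 32 ^ k + 4 * size k ≤ n) :
    |seq n| ≤ 2 * base (k + 1) := by
  have hk : k ≤ Nat.log 32 n := Nat.le_log_of_pow_le (by norm_num) (by omega)
  rcases hk.eq_or_lt with hk | hk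
  · have hb := base_pos (k + 1)
    rw [seq, ← hk, block_of_le (by omega), abs_zero]
    positivity
  · exact (abs_seq_le n).trans (by gcongr; exact base_anti hk)

lemma eq_or_eq_of_abs_seq_eq {k q l : ℕ} (hk : k ≠ 0) (hq : q < 2 * size k)
    (hl : |seq l| = mag k q) : l = 32 ^ k + q ∨ l = 32 ^ k + 2 * size k + q := by
  have hl0 : seq l ≠ 0 := fun h => by
    rw [h, abs_zero] at hl
    linarith [base_pos k, base_le_mag k q]
  obtain ⟨k', q', hk', hq', hpos⟩ := exists_of_seq_ne_zero hl0
  have habs : |seq l| = mag k' q' := by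
    rcases hpos with rfl | rfl
    · rw [seq_first hk' hq', abs_firstHalf]
    · rw [seq_second hk' hq', abs_neg, abs_firstHalf]
  obtain ⟨rfl, rfl⟩ := mag_injOn hq' hq (habs.symm.trans hl)
  exact hpos

lemma pairedLevels_seq : PairedLevels seq := by
  intro n hn
  obtain ⟨k, q, hk, hq, rfl | rfl⟩ := exists_of_seq_ne_zero hn
  · refine ⟨32 ^ k + 2 * size k + q, by rw [seq_second hk hq, seq_first hk hq], fun l hl => ?_⟩
    exact eq_or_eq_of_abs_seq_eq hk hq (by rw [hl, seq_first hk hq, abs_firstHalf])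
  · refine ⟨32 ^ k + q, by rw [seq_first hk hq, seq_second hk hq, neg_neg], fun l hl => ?_⟩
    exact (eq_or_eq_of_abs_seq_eq hk hq (by rw [hl, seq_second hk hq, abs_neg, abs_firstHalf])).symm

lemma frequently_seq_ne_zero : ∃ᶠ n in atTop, seq n ≠ 0 := by
  refine frequently_atTop.2 fun M => ⟨32 ^ (M + 1), (Nat.lt_pow_self (by norm_num)).le.trans
    (Nat.pow_le_pow_right (by norm_num) M.le_succ), ?_⟩
  have h := seq_first (k := M + 1) (q := 0) M.succ_ne_zero (by have := size_pos (M + 1); omega)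
  rw [add_zero] at h
  rw [h, ← abs_ne_zero, abs_firstHalf]
  exact ((base_pos _).trans_le (base_le_mag _ _)).ne'

lemma tendsto_base_log : Tendsto (fun n => base (Nat.log 32 n)) atTop (nhds 0) :=
  tendsto_base.comp <| tendsto_atTop_atTop.2 fun K =>
    ⟨32 ^ K, fun _ hn => Nat.le_log_of_pow_le (by norm_num) hn⟩

lemma memc0_seq : Memc0 seq :=
  squeeze_zero_norm abs_seq_le (by simpa using tendsto_base_log.const_mul 2)

lemma sum_range_seq_pow (k : ℕ) : ∑ n ∈ Finset.range (32 ^ k), seq n = 0 := by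
  induction k with
  | zero => simp [seq, block_zero_left]
  | succ k ih =>
    rw [show 32 ^ (k + 1) = 32 ^ k + 31 * 32 ^ k by ring, Finset.sum_range_add, ih, zero_add,
      Finset.sum_congr rfl fun r hr => seq_pow_add (Finset.mem_range.1 hr)]
    exact sum_range_block_of_le (four_mul_size_lt k).le

lemma abs_sum_range_seq_le (m : ℕ) :
    |∑ n ∈ Finset.range m, seq n| ≤ 3 * base (Nat.log 32 m) := by
  rcases eq_or_ne m 0 with rfl | hm
  · simp [(base_pos 0).le]
  set k := Nat.log 32 m
  have hle : 32 ^ k ≤ m := Nat.pow_log_le_self 32 hm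
  have hlt : m < 32 ^ (k + 1) := Nat.lt_pow_succ_log_self (by norm_num) m
  obtain ⟨r, hr⟩ := Nat.exists_eq_add_of_le hle
  have hr' : r ≤ 31 * 32 ^ k := by rw [pow_succ] at hlt; omega
  rw [hr, Finset.sum_range_add, sum_range_seq_pow, zero_add, Finset.sum_congr rfl fun q hq =>
    seq_pow_add ((Finset.mem_range.1 hq).trans_le hr')]
  exact abs_sum_range_block_le k r

lemma seriesLim_seq : SeriesLim seq 0 :=
  squeeze_zero_norm abs_sum_range_seq_le (by simpa using tendsto_base_log.const_mul 3)

noncomputable def threshold (k : ℕ) : ℝ := base k * (1 + size k / (4 * size k ^ 2))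

lemma threshold_lt_mag_iff {k q : ℕ} (hq : q < 2 * size k) :
    threshold k < mag k q ↔ Even q := by
  have hD : (0 : ℝ) < 4 * size k ^ 2 := by have := size_pos k; positivity
  rw [threshold, mag, ← size_lt_level_iff hq, mul_lt_mul_iff_right₀ (base_pos k),
    add_lt_add_iff_left, div_lt_div_iff_of_pos_right hD, Nat.cast_lt]

lemma exists_greedySet_pow_le (k : ℕ) (hk : k ≠ 0) : ∃ A, GreedySet seq A ∧
    ∃ a b, (4 : ℝ) ^ k ≤ |oneStar seq (Finset.Icc a b \ A)| := by
  set A := (Finset.range (32 ^ k + 4 * size k)).filter fun n => threshold k < |seq n|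
  have hA : GreedySet seq A := greedySet_filter_range fun n hn =>
    calc |seq n| ≤ 2 * base (k + 1) := abs_seq_le_of_le hn
      _ ≤ base k := by rw [two_mul_base_succ]; linarith [base_pos k]
      _ ≤ threshold k := by
        rw [threshold]
        have : (0 : ℝ) ≤ size k / (4 * size k ^ 2) := by positivity
        nlinarith [base_pos k]
  have hmem : ∀ q < 2 * size k, 32 ^ k + q ∈ A ↔ Even q := fun q hq => by
    simp only [A, Finset.mem_filter, Finset.mem_range, seq_first hk hq, abs_firstHalf,
      threshold_lt_mag_iff hq]
    exact and_iff_right (by omega)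
  have hdiff : Finset.Icc (32 ^ k) (32 ^ k + (2 * size k - 1)) \ A =
      (Finset.range (size k)).image fun i => 32 ^ k + (2 * i + 1) := by
    ext n
    simp only [Finset.mem_sdiff, Finset.mem_Icc, Finset.mem_image, Finset.mem_range]
    constructor
    · rintro ⟨⟨h₁, h₂⟩, hn⟩
      obtain ⟨q, rfl⟩ := Nat.exists_eq_add_of_le h₁
      have := size_pos k
      have hodd := Nat.not_even_iff_odd.1 (mt (hmem q (by omega)).2 hn)
      rw [Nat.odd_iff] at hodd
      exact ⟨q / 2, by omega, by omega⟩
    · rintro ⟨i, hi, rfl⟩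
      refine ⟨⟨by omega, by omega⟩, fun h => ?_⟩
      exact Nat.not_even_iff_odd.2 (odd_two_mul_add_one i) ((hmem _ (by omega)).1 h)
  refine ⟨A, hA, 32 ^ k, 32 ^ k + (2 * size k - 1), ?_⟩
  calc (4 : ℝ) ^ k = ∑ _i ∈ Finset.range (size k), base k := by
        rw [Finset.sum_const, Finset.card_range, nsmul_eq_mul, size_mul_base]
    _ ≤ ∑ i ∈ Finset.range (size k), mag k (2 * i + 1) :=
        Finset.sum_le_sum fun i _ => base_le_mag k _
    _ = -oneStar seq (Finset.Icc (32 ^ k) (32 ^ k + (2 * size k - 1)) \ A) := by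
        rw [hdiff, oneStar, Finset.sum_image fun _ _ _ _ h => by omega, ← Finset.sum_neg_distrib]
        refine Finset.sum_congr rfl fun i hi => ?_
        have hi : i < size k := Finset.mem_range.1 hi
        rw [seq_first hk (by omega), firstHalf_two_mul_add_one, neg_neg]
    _ ≤ _ := neg_le_abs _

lemma bNorm_seq : BNorm seq = ⊤ := BNorm_eq_top_of_forall_le fun x => by
  obtain ⟨k, hk⟩ := pow_unbounded_of_one_lt x (by norm_num : (1 : ℝ) < 4)
  obtain ⟨A, hA, a, b, h⟩ := exists_greedySet_pow_le (k + 1) k.succ_ne_zero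
  exact ⟨A, hA, a, b, hk.le.trans ((pow_le_pow_right₀ (by norm_num) k.le_succ).trans h)⟩

end Counterexample

/-- there is `h ∈ 𝔸 ∩ 𝒔` with `‖h‖_𝔹 = ∞`; in particular
`𝔸 ∩ 𝒔 ⊄ 𝔹`. -/
theorem stmt_13 :
    (∃ h : ℕ → ℝ, MemA h ∧ MemSeries h ∧ BNorm h = ⊤) ∧
    ¬ ∀ f : ℕ → ℝ, MemA f → MemSeries f → MemB f := by
  have hex : ∃ h : ℕ → ℝ, MemA h ∧ MemSeries h ∧ BNorm h = ⊤ :=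
    ⟨Counterexample.seq,
      Counterexample.pairedLevels_seq.memA Counterexample.memc0_seq
        Counterexample.frequently_seq_ne_zero,
      ⟨0, Counterexample.seriesLim_seq⟩, Counterexample.bNorm_seq⟩
  refine ⟨hex, fun hall => ?_⟩
  obtain ⟨h, hA, hS, hB⟩ := hex
  exact (hall h hA hS).ne hB
end
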